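/- Under the hypotheses Δ_S = H_SS⁻¹(R_S − G_S − λZ_S), ‖H_S̄S H_SS⁻¹‖_{∞,op} ≤ 1 − α for some α ∈ (0,1), ‖Z_S‖_∞ ≤ 1, and max{‖G‖_∞, ‖R‖_∞} ≤ αλ/8, the dual vector Z_S̄ = −(1/λ)H_S̄S H_SS⁻¹(R_S − G_S) + H_S̄S H_SS⁻¹ Z_S + (1/λ)(R_S̄ − G_S̄) satisfies ‖Z_S̄‖_∞ ≤ (2−α)/λ · (‖G‖_∞ + ‖R‖_∞) + (1−α) < 1 (strict dual feasibility). -/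
import Mathlib


open Matrix

/-- Supremum norm of a finitely indexed real vector. -/
noncomputable def vsup {ι : Type*} [Fintype ι] (v : ι → ℝ) : ℝ := ⨆ i, |v i|

/-- ℓ∞ operator norm (maximum absolute row sum). -/
noncomputable def rowOpNorm {m n : Type*} [Fintype m] [Fintype n]
    (A : Matrix m n ℝ) : ℝ :=
  ⨆ i, ∑ j, |A i j|

lemma vsup_nonneg {ι : Type*} [Fintype ι] (v : ι → ℝ) : 0 ≤ vsup v :=
  Real.iSup_nonneg fun i => abs_nonneg _

lemma abs_le_vsup {ι : Type*} [Fintype ι] (v : ι → ℝ) (i : ι) : |v i| ≤ vsup v :=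
  le_ciSup (f := fun j => |v j|) (Set.Finite.bddAbove (Set.finite_range _)) i

lemma vsup_le' {ι : Type*} [Fintype ι] {v : ι → ℝ} {c : ℝ} (hc : 0 ≤ c)
    (h : ∀ i, |v i| ≤ c) : vsup v ≤ c :=
  Real.iSup_le h hc

lemma mulVec_abs_le {m n : Type*} [Fintype m] [Fintype n]
    (A : Matrix m n ℝ) (v : n → ℝ) (i : m) :
    |A.mulVec v i| ≤ rowOpNorm A * vsup v := by
  have h1 : |A.mulVec v i| ≤ (∑ j, |A i j|) * vsup v := by
    calc |A.mulVec v i| = |∑ j, A i j * v j| := rfl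
      _ ≤ ∑ j, |A i j * v j| := Finset.abs_sum_le_sum_abs _ _
      _ = ∑ j, |A i j| * |v j| := by simp [abs_mul]
      _ ≤ ∑ j, |A i j| * vsup v := by
          refine Finset.sum_le_sum fun j _ => ?_
          exact mul_le_mul_of_nonneg_left (abs_le_vsup v j) (abs_nonneg _)
      _ = (∑ j, |A i j|) * vsup v := by rw [Finset.sum_mul]
  refine h1.trans (mul_le_mul_of_nonneg_right ?_ (vsup_nonneg v))
  exact le_ciSup (f := fun i => ∑ j, |A i j|) (Set.Finite.bddAbove (Set.finite_range _)) i

/-- Strict dual feasibility: `‖Z_S̄‖_∞ ≤ (2−α)/λ (‖G‖_∞ + ‖R‖_∞) + (1−α) < 1`. -/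
theorem stmt17 {ι κ : Type*} [Fintype ι] [Fintype κ] [DecidableEq ι]
    (HSS : Matrix ι ι ℝ) (HsS : Matrix κ ι ℝ)
    (GS RS ZS ΔS : ι → ℝ) (Gs Rs Zs : κ → ℝ) (lam α : ℝ)
    (hinv : IsUnit HSS.det) (hlam : 0 < lam) (hα : α ∈ Set.Ioo (0 : ℝ) 1)
    (hΔ : ΔS = HSS⁻¹.mulVec (RS - GS - lam • ZS))
    (hM : rowOpNorm (HsS * HSS⁻¹) ≤ 1 - α)
    (hZS : vsup ZS ≤ 1)
    (hG : max (vsup GS) (vsup Gs) ≤ α * lam / 8)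
    (hR : max (vsup RS) (vsup Rs) ≤ α * lam / 8)
    (hZs : Zs = (-(1 / lam)) • (HsS * HSS⁻¹).mulVec (RS - GS)
        + (HsS * HSS⁻¹).mulVec ZS + (1 / lam) • (Rs - Gs)) :
    vsup Zs ≤ (2 - α) / lam * (max (vsup GS) (vsup Gs) + max (vsup RS) (vsup Rs)) + (1 - α) ∧
    (2 - α) / lam * (max (vsup GS) (vsup Gs) + max (vsup RS) (vsup Rs)) + (1 - α) < 1 := by
  obtain ⟨hα0, hα1⟩ := hα
  set M := HsS * HSS⁻¹ with hMdef
  set mG := max (vsup GS) (vsup Gs)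
  set mR := max (vsup RS) (vsup Rs)
  have hmG0 : 0 ≤ mG := le_trans (vsup_nonneg GS) (le_max_left _ _)
  have hmR0 : 0 ≤ mR := le_trans (vsup_nonneg RS) (le_max_left _ _)
  have h1α : (0:ℝ) ≤ 1 - α := by linarith
  have hrowM0 : 0 ≤ rowOpNorm M := Real.iSup_nonneg fun i =>
    Finset.sum_nonneg fun j _ => abs_nonneg _
  -- bound on vsup (RS - GS)
  have hRG : vsup (RS - GS) ≤ mR + mG := by
    refine vsup_le' (by linarith) fun i => ?_
    calc |(RS - GS) i| = |RS i - GS i| := rfl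
      _ ≤ |RS i| + |GS i| := abs_sub _ _
      _ ≤ vsup RS + vsup GS := add_le_add (abs_le_vsup _ _) (abs_le_vsup _ _)
      _ ≤ mR + mG := add_le_add (le_max_left _ _) (le_max_left _ _)
  have hRHS0 : 0 ≤ (2 - α) / lam * (mG + mR) + (1 - α) := by
    have : 0 ≤ (2 - α) / lam := div_nonneg (by linarith) hlam.le
    nlinarith
  constructor
  · refine vsup_le' hRHS0 fun k => ?_
    have hZk : Zs k = -(1 / lam) * M.mulVec (RS - GS) k + M.mulVec ZS k
        + (1 / lam) * (Rs k - Gs k) := by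
      rw [hZs]; simp [Pi.add_apply, Pi.smul_apply, smul_eq_mul]
    have hb1 : |M.mulVec (RS - GS) k| ≤ (1 - α) * (mR + mG) :=
      (mulVec_abs_le M _ k).trans
        (mul_le_mul hM hRG (vsup_nonneg _) h1α)
    have hb2 : |M.mulVec ZS k| ≤ 1 - α :=
      (mulVec_abs_le M ZS k).trans <| by
        nlinarith [vsup_nonneg ZS, mul_le_mul hM hZS (vsup_nonneg ZS) h1α]
    have hb3 : |Rs k - Gs k| ≤ mR + mG := by
      calc |Rs k - Gs k| ≤ |Rs k| + |Gs k| := abs_sub _ _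
        _ ≤ vsup Rs + vsup Gs := add_le_add (abs_le_vsup _ _) (abs_le_vsup _ _)
        _ ≤ mR + mG := add_le_add (le_max_right _ _) (le_max_right _ _)
    have hlam' : 0 < 1 / lam := by positivity
    calc |Zs k| ≤ (1/lam) * |M.mulVec (RS - GS) k| + |M.mulVec ZS k|
          + (1/lam) * |Rs k - Gs k| := by
          rw [hZk]
          calc |(-(1 / lam) * M.mulVec (RS - GS) k + M.mulVec ZS k
              + (1 / lam) * (Rs k - Gs k))|
              ≤ |(-(1 / lam) * M.mulVec (RS - GS) k + M.mulVec ZS k)|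
                + |(1 / lam) * (Rs k - Gs k)| := abs_add_le _ _
            _ ≤ |(-(1 / lam) * M.mulVec (RS - GS) k)| + |M.mulVec ZS k|
                + |(1 / lam) * (Rs k - Gs k)| := by
                  gcongr; exact abs_add_le _ _
            _ = (1/lam) * |M.mulVec (RS - GS) k| + |M.mulVec ZS k|
                + (1/lam) * |Rs k - Gs k| := by
                  rw [abs_mul, abs_mul, abs_neg, abs_of_pos hlam']
      _ ≤ (1/lam) * ((1 - α) * (mR + mG)) + (1 - α) + (1/lam) * (mR + mG) := by
          gcongr
      _ = (2 - α) / lam * (mG + mR) + (1 - α) := by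
          field_simp; ring
  · have hsum : mG + mR ≤ α * lam / 4 := by linarith
    have key : (2 - α) / lam * (mG + mR) ≤ (2 - α) / lam * (α * lam / 4) := by
      apply mul_le_mul_of_nonneg_left hsum (div_nonneg (by linarith) hlam.le)
    have : (2 - α) / lam * (α * lam / 4) = (2 - α) * α / 4 := by
      field_simp
    rw [this] at key
    nlinarith
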